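/- Let C be a commutative k-algebra, A a C-algebra, B ⊆ A a C-subalgebra generated by {b_j}, τ a C-algebra automorphism of A, and δ a u-skew τ-derivation on A for a unit u ∈ C (δτ = uτδ). If τ(b_j) ∈ B and δ^n(b_j) ∈ (n)!_u · B for all j and n, then δ^n(B) ⊆ (n)!_u · B for all n. -/

import Mathlib

/-!
By the `u`-Leibniz rule `δⁿ(ab) = ∑ binom(n, i)_u τ^(n-i)(δⁱ a) δ^(n-i)(b)` together with
`binom(n, i)_u (i)!_u (n-i)!_u = (n)!_u`, the elements `a` with `δⁿ a ∈ (n)!_u B` for all `n`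
form a subalgebra as soon as `τ(B) ⊆ B`. It contains the generators, hence all of `B`.
-/

/-- The `q`-integer `(m)_q = q^(m-1) + ⋯ + q + 1`. -/
def qNat {k : Type*} [CommRing k] (q : k) (m : ℕ) : k := ∑ i ∈ Finset.range m, q ^ i

/-- The `q`-factorial `(m)!_q`. -/
def qFact {k : Type*} [CommRing k] (q : k) : ℕ → k
  | 0 => 1
  | n + 1 => qNat q (n + 1) * qFact q n

open Finset

/-- `qBinom q i j` is the `q`-binomial coefficient `binom(i + j, i)_q`. -/
def qBinom {R : Type*} [CommRing R] (q : R) : ℕ → ℕ → R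
  | 0, _ => 1
  | _ + 1, 0 => 1
  | i + 1, j + 1 => qBinom q (i + 1) j + q ^ (j + 1) * qBinom q i (j + 1)

section QBinomial

variable {R : Type*} [CommRing R] (q : R)

theorem qNat_add (m l : ℕ) : qNat q (m + l) = qNat q m + q ^ m * qNat q l := by
  simp only [qNat, sum_range_add, pow_add, mul_sum]

theorem qFact_succ (n : ℕ) : qFact q (n + 1) = qNat q (n + 1) * qFact q n := rfl

theorem qBinom_mul_qFact_mul_qFact :
    ∀ i j : ℕ, qBinom q i j * (qFact q i * qFact q j) = qFact q (i + j)
  | 0, j => by simp [qBinom, qFact]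
  | i + 1, 0 => by simp [qBinom, qFact]
  | i + 1, j + 1 => by
      have ih₁ := qBinom_mul_qFact_mul_qFact (i + 1) j
      have ih₂ := qBinom_mul_qFact_mul_qFact i (j + 1)
      have hnat : qNat q (i + j + 1 + 1) = qNat q (j + 1) + q ^ (j + 1) * qNat q (i + 1) := by
        rw [← qNat_add]; ring_nf
      rw [show i + 1 + j = i + j + 1 by ring, qFact_succ q i] at ih₁
      rw [show i + (j + 1) = i + j + 1 by ring, qFact_succ q j] at ih₂
      rw [show i + 1 + (j + 1) = i + j + 1 + 1 by ring, qFact_succ q (i + j + 1), hnat, qBinom,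
        qFact_succ q i, qFact_succ q j]
      linear_combination qNat q (j + 1) * ih₁ + q ^ (j + 1) * qNat q (i + 1) * ih₂

/-- The `q`-Pascal rule, in the shape produced by applying a skew derivation once more. -/
theorem sum_antidiagonal_succ_qBinom_smul {M : Type*} [AddCommMonoid M] [Module R M]
    (F : ℕ → ℕ → M) (n : ℕ) :
    ∑ p ∈ antidiagonal (n + 1), qBinom q p.1 p.2 • F p.1 p.2 =
      ∑ p ∈ antidiagonal n, qBinom q p.1 p.2 • F p.1 (p.2 + 1) +
        ∑ p ∈ antidiagonal n, (q ^ p.2 * qBinom q p.1 p.2) • F (p.1 + 1) p.2 := by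
  rcases n with _ | m
  · simp [Nat.sum_antidiagonal_succ, qBinom]
  · rw [Nat.sum_antidiagonal_succ, Nat.sum_antidiagonal_succ', Nat.sum_antidiagonal_succ,
      Nat.sum_antidiagonal_succ' (n := m)]
    simp only [qBinom, add_smul, sum_add_distrib, pow_zero, one_mul]
    abel

end QBinomial

section SkewDerivation

variable {R A : Type*} [CommRing R] [Ring A] [Algebra R A]

structure IsSkewDerivation (τ : A ≃ₐ[R] A) (δ : Module.End R A) (q : R) : Prop where
  map_mul : ∀ a b : A, δ (a * b) = τ a * δ b + δ a * b
  map_apply_comm : ∀ a : A, δ (τ a) = q • τ (δ a)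

def IsQFactDivisible (δ : Module.End R A) (q : R) (B : Subalgebra R A) (a : A) : Prop :=
  ∀ n : ℕ, ∃ c ∈ B, (δ ^ n) a = qFact q n • c

variable {τ : A ≃ₐ[R] A} {δ : Module.End R A} {q : R}

theorem IsQFactDivisible.add {B : Subalgebra R A} {a b : A} (ha : IsQFactDivisible δ q B a)
    (hb : IsQFactDivisible δ q B b) : IsQFactDivisible δ q B (a + b) := fun n => by
  obtain ⟨c, hcB, hc⟩ := ha n
  obtain ⟨d, hdB, hd⟩ := hb n
  exact ⟨c + d, B.add_mem hcB hdB, by rw [map_add, hc, hd, smul_add]⟩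

namespace IsSkewDerivation

theorem map_pow_apply (hδ : IsSkewDerivation τ δ q) (m : ℕ) (x : A) :
    δ ((τ ^ m) x) = q ^ m • (τ ^ m) (δ x) := by
  induction m with
  | zero => simp
  | succ m ih =>
    rw [pow_succ', pow_succ', AlgEquiv.mul_apply, AlgEquiv.mul_apply, hδ.map_apply_comm, ih,
      map_smul, smul_smul]

theorem map_one (hδ : IsSkewDerivation τ δ q) : δ 1 = 0 := by
  simpa using hδ.map_mul 1 1

theorem map_algebraMap (hδ : IsSkewDerivation τ δ q) (r : R) : δ (algebraMap R A r) = 0 := by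
  rw [Algebra.algebraMap_eq_smul_one, map_smul, hδ.map_one, smul_zero]

theorem pow_apply_mul (hδ : IsSkewDerivation τ δ q) (n : ℕ) (x y : A) :
    (δ ^ n) (x * y) =
      ∑ p ∈ antidiagonal n, qBinom q p.1 p.2 • ((τ ^ p.2) ((δ ^ p.1) x) * (δ ^ p.2) y) := by
  induction n with
  | zero => simp [qBinom]
  | succ n ih =>
    rw [pow_succ', Module.End.mul_apply, ih, map_sum,
      sum_antidiagonal_succ_qBinom_smul q (fun i j => (τ ^ j) ((δ ^ i) x) * (δ ^ j) y),
      ← sum_add_distrib]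
    refine sum_congr rfl fun p _ => ?_
    simp only [map_smul, hδ.map_mul, hδ.map_pow_apply, pow_succ', AlgEquiv.mul_apply,
      Module.End.mul_apply, smul_add, smul_mul_assoc, smul_smul, mul_comm]

theorem isQFactDivisible_algebraMap (hδ : IsSkewDerivation τ δ q) (B : Subalgebra R A)
    (r : R) : IsQFactDivisible δ q B (algebraMap R A r) := by
  rintro (_ | n)
  · exact ⟨_, B.algebraMap_mem r, by simp [qFact]⟩
  · refine ⟨0, B.zero_mem, ?_⟩
    rw [pow_succ, Module.End.mul_apply, hδ.map_algebraMap, map_zero, smul_zero]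

theorem isQFactDivisible_mul (hδ : IsSkewDerivation τ δ q) {B : Subalgebra R A}
    (hB : Set.MapsTo τ B B) {a b : A} (ha : IsQFactDivisible δ q B a)
    (hb : IsQFactDivisible δ q B b) : IsQFactDivisible δ q B (a * b) := by
  intro n
  choose c hcB hc using ha
  choose d hdB hd using hb
  refine ⟨∑ p ∈ antidiagonal n, (τ ^ p.2) (c p.1) * d p.2,
    B.sum_mem fun p _ => B.mul_mem (by simpa using (hB.iterate p.2) (hcB p.1)) (hdB p.2), ?_⟩
  rw [hδ.pow_apply_mul, smul_sum]
  refine sum_congr rfl fun p hp => ?_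
  rw [← mem_antidiagonal.mp hp, ← qBinom_mul_qFact_mul_qFact, hc, hd, map_smul,
    smul_mul_smul_comm, smul_smul]

def qFactDivisibleSubalgebra (hδ : IsSkewDerivation τ δ q) {B : Subalgebra R A}
    (hB : Set.MapsTo τ B B) : Subalgebra R A where
  carrier := {a | IsQFactDivisible δ q B a}
  mul_mem' := hδ.isQFactDivisible_mul hB
  add_mem' := IsQFactDivisible.add
  algebraMap_mem' := hδ.isQFactDivisible_algebraMap B

end IsSkewDerivation

end SkewDerivation

theorem uskew_derivation_containment_general {C A ι : Type*} [CommRing C]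
    [Ring A] [Algebra C A]
    (u : Cˣ) (τ : A ≃ₐ[C] A) (δ : A →ₗ[C] A)
    (hder : ∀ a b : A, δ (a * b) = τ a * δ b + δ a * b)
    (hskew : ∀ a : A, δ (τ a) = (u : C) • τ (δ a))
    (b : ι → A)
    (hτb : ∀ j : ι, τ (b j) ∈ Algebra.adjoin C (Set.range b))
    (hδb : ∀ (n : ℕ) (j : ι), ∃ c ∈ Algebra.adjoin C (Set.range b),
        (⇑δ)^[n] (b j) = qFact (u : C) n • c) :
    ∀ (n : ℕ) (a : A), a ∈ Algebra.adjoin C (Set.range b) →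
      ∃ c ∈ Algebra.adjoin C (Set.range b), (⇑δ)^[n] a = qFact (u : C) n • c := by
  intro n a ha
  set B := Algebra.adjoin C (Set.range b)
  have hδ : IsSkewDerivation τ δ (u : C) := ⟨hder, hskew⟩
  have hτB : Set.MapsTo τ B B := fun x hx =>
    Algebra.adjoin_le (S := B.comap τ.toAlgHom) (Set.range_subset_iff.2 hτb) hx
  have hB : B ≤ hδ.qFactDivisibleSubalgebra hτB :=
    Algebra.adjoin_le <| Set.range_subset_iff.2 fun j n => by
      simpa only [Module.End.coe_pow] using hδb n j
  simpa only [Module.End.coe_pow] using hB ha n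

/-- Let `C` be a commutative `k`-algebra, `A` a `C`-algebra, `B ⊆ A` the
`C`-subalgebra generated by `{b_j}`, `τ` a `C`-algebra automorphism of `A`,
and `δ` a u-skew `τ`-derivation on `A` for a unit `u ∈ C` (`δτ = uτδ`).
If `τ(b_j) ∈ B` and `δ^n(b_j) ∈ (n)!_u B` for all `j, n`, then
`δ^n(B) ⊆ (n)!_u B` for all `n`. -/
theorem uskew_derivation_containment {k C A ι : Type*} [Field k] [CommRing C]
    [Algebra k C] [Ring A] [Algebra C A]
    (u : Cˣ) (τ : A ≃ₐ[C] A) (δ : A →ₗ[C] A)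
    (hder : ∀ a b : A, δ (a * b) = τ a * δ b + δ a * b)
    (hskew : ∀ a : A, δ (τ a) = (u : C) • τ (δ a))
    (b : ι → A)
    (hτb : ∀ j : ι, τ (b j) ∈ Algebra.adjoin C (Set.range b))
    (hδb : ∀ (n : ℕ) (j : ι), ∃ c ∈ Algebra.adjoin C (Set.range b),
        (⇑δ)^[n] (b j) = qFact (u : C) n • c) :
    ∀ (n : ℕ) (a : A), a ∈ Algebra.adjoin C (Set.range b) →
      ∃ c ∈ Algebra.adjoin C (Set.range b), (⇑δ)^[n] a = qFact (u : C) n • c :=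
  uskew_derivation_containment_general u τ δ hder hskew b hτb hδb
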